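/- If there is a set S ⊆ ω^ω of cardinality λ such that |S ∩ C| < μ for every compact C ⊆ ω^ω, then every ℵ₁-incomplete ultrafilter over any κ is (λ,μ;ω)-regular. -/

import Mathlib

universe u

namespace UMeas

variable {A : Type u}

/-- The first `n` values of an infinite sequence, as a list. -/
def seg (s : ℕ → A) (n : ℕ) : List A := List.ofFn (fun i : Fin n => s i)

/-- `T` is a `U`-branching tree: a set of finite sequences closed under initial
segments, containing the empty sequence, whose branching sets are in `U`. -/
def IsUTree (U : Ultrafilter A) (T : Set (List A)) : Prop :=
  ([] ∈ T) ∧ (∀ σ ∈ T, ∀ τ : List A, τ <+: σ → τ ∈ T) ∧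
    ∀ σ ∈ T, {a : A | σ ++ [a] ∈ T} ∈ U

/-- The set of infinite branches through `T`. -/
def branches (T : Set (List A)) : Set (ℕ → A) := {s | ∀ n, seg s n ∈ T}

/-- Concatenation `σ⌢s` of a finite sequence with an infinite sequence. -/
def app (σ : List A) (s : ℕ → A) : ℕ → A :=
  fun n => if h : n < σ.length then σ.get ⟨n, h⟩ else s (n - σ.length)

/-- The section `X↾σ = {s | σ⌢s ∈ X}`. -/
def sect (X : Set (ℕ → A)) (σ : List A) : Set (ℕ → A) := {s | app σ s ∈ X}

def ULarge (U : Ultrafilter A) (X : Set (ℕ → A)) : Prop :=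
  ∃ T, IsUTree U T ∧ branches T ⊆ X

def USmall (U : Ultrafilter A) (X : Set (ℕ → A)) : Prop :=
  ∃ T, IsUTree U T ∧ branches T ∩ X = ∅

def UDetermined (U : Ultrafilter A) (X : Set (ℕ → A)) : Prop :=
  ULarge U X ∨ USmall U X

def UNull (U : Ultrafilter A) (X : Set (ℕ → A)) : Prop :=
  ∀ σ : List A, USmall U (sect X σ)

def UMeasurable (U : Ultrafilter A) (X : Set (ℕ → A)) : Prop :=
  ∀ σ : List A, UDetermined U (sect X σ)

end UMeas

namespace UMeas

/-- Sequences of ordinal length `β` with values in `A`. -/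
def OSeq (A : Type u) (β : Ordinal.{u}) := ∀ γ : Ordinal.{u}, γ < β → A

/-- Restriction `s↾γ` of an ordinal-length sequence. -/
def ores {A : Type u} {β : Ordinal.{u}} (s : OSeq A β) (γ : Ordinal.{u}) (h : γ ≤ β) :
    OSeq A γ := fun δ hδ => s δ (hδ.trans_le h)

/-- Extension `s⌢⟨a⟩` of an ordinal-length sequence by one element. -/
noncomputable def oext {A : Type u} {β : Ordinal.{u}} (s : OSeq A β) (a : A) : OSeq A (β + 1) :=
  fun δ hδ => if h : δ < β then s δ h else a

/-- A closed `U`-branching tree of height `α`: for each `β`, `mem β` is the set of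
sequences of length `β` in the tree (only levels `β < α` are relevant). -/
structure ClosedUBT (A : Type u) (U : Ultrafilter A) (α : Ordinal.{u}) where
  mem : ∀ β : Ordinal.{u}, Set (OSeq A β)
  isTree : ∀ β γ : Ordinal.{u}, β < α → (h : γ ≤ β) → ∀ s ∈ mem β, ores s γ h ∈ mem γ
  succ : ∀ β : Ordinal.{u}, β + 1 < α → ∀ s ∈ mem β, {a : A | oext s a ∈ mem (β + 1)} ∈ U
  nonsucc : ∀ β : Ordinal.{u}, β < α → (¬ ∃ γ : Ordinal.{u}, β = γ + 1) →
    ∀ s : OSeq A β, s ∈ mem β ↔ ∀ γ : Ordinal.{u}, (h : γ < β) → ores s γ h.le ∈ mem γ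

/-- `U` is `(l, m; α)`-regular: there is a family of `l` closed `U`-branching trees of
height `α + 1` such that no subfamily of size `m` has a common maximal element. -/
def LMARegular {A : Type u} (U : Ultrafilter A) (l m : Cardinal.{u}) (α : Ordinal.{u}) : Prop :=
  ∃ T : (Cardinal.ord l).ToType → ClosedUBT A U (α + 1),
    ∀ S : Set (Cardinal.ord l).ToType, Cardinal.mk ↥S = m →
      ¬ ∃ s : OSeq A α, ∀ β ∈ S, s ∈ (T β).mem α

end UMeas

/-!
An `ℵ₁`-incomplete ultrafilter `U` carries a function `g : A → ℕ` tending to infinity along `U`.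
To `σ ∈ S` attach the closed `U`-branching tree of all `s` with `σ n ≤ g (s n)` for every `n`.
A common branch `s` of the trees of a subfamily `S' ⊆ S` bounds every `σ ∈ S'` by
`n ↦ g (s n)`, so `S'` lies in the compact box below that function and has fewer than `μ` elements.
-/

namespace UMeas

theorem exists_tendsto_atTop_of_iInter_notMem {A : Type u} {U : Ultrafilter A}
    (hU : ∃ f : ℕ → Set A, (∀ n, f n ∈ U) ∧ (⋂ n, f n) ∉ U) :
    ∃ g : A → ℕ, Filter.Tendsto g U Filter.atTop := by
  classical
  obtain ⟨f, hf, hfi⟩ := hU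
  refine ⟨fun a => if h : ∃ n, a ∉ f n then Nat.find h else 0,
    Filter.tendsto_atTop.mpr fun N => ?_⟩
  have hbelow : (⋂ k ∈ Finset.range N, f k) ∈ U :=
    (Filter.biInter_finset_mem _).mpr fun k _ => hf k
  filter_upwards [hbelow, Ultrafilter.compl_mem_iff_notMem.mpr hfi] with a ha hout
  have hex : ∃ n, a ∉ f n := by simpa using hout
  simp only [Set.mem_iInter, Finset.mem_range] at ha
  rw [dif_pos hex, Nat.le_find_iff]
  exact fun k hk hk' => hk' (ha k hk)

def ClosedUBT.pi {A : Type u} {U : Ultrafilter A} {α : Ordinal.{u}} (F : Ordinal.{u} → Set A)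
    (hF : ∀ γ, F γ ∈ U) : ClosedUBT A U α where
  mem β := {s | ∀ γ (h : γ < β), s γ h ∈ F γ}
  isTree _ _ _ hγβ _ hs δ hδ := hs δ (hδ.trans_le hγβ)
  succ β _ s hs := Filter.mem_of_superset (hF β) fun a ha γ hγ => by
    by_cases h : γ < β
    · simpa [oext, h] using hs γ h
    · have : γ = β := le_antisymm (Order.lt_add_one_iff.mp hγ) (not_lt.mp h)
      subst this
      simpa [oext] using ha
  nonsucc β _ hβ _ :=
    ⟨fun hs _ hγ δ hδ => hs δ (hδ.trans hγ), fun h γ hγ =>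
      h (γ + 1) ((Order.add_one_le_of_lt hγ).lt_of_ne fun e => hβ ⟨γ, e.symm⟩) γ (lt_add_one γ)⟩

/-- Only the finite levels `γ = n` carry a condition. -/
def boundSet {A : Type u} (g : A → ℕ) (σ : ℕ → ℕ) (γ : Ordinal.{u}) : Set A :=
  {a | ∀ n : ℕ, (n : Ordinal) = γ → σ n ≤ g a}

theorem boundSet_mem {A : Type u} {U : Ultrafilter A} {g : A → ℕ}
    (hg : Filter.Tendsto g U Filter.atTop) (σ : ℕ → ℕ) (γ : Ordinal.{u}) :
    boundSet g σ γ ∈ U := by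
  by_cases hγ : ∃ n : ℕ, (n : Ordinal) = γ
  · obtain ⟨n, rfl⟩ := hγ
    filter_upwards [hg.eventually_ge_atTop (σ n)] with a ha k hk
    rwa [Nat.cast_inj.mp hk]
  · exact Filter.univ_mem' fun a n hn => absurd ⟨n, hn⟩ hγ

end UMeas

open UMeas in
theorem stmt19 (l m : Cardinal.{0}) (S : Set (ℕ → ℕ))
    (hcard : Cardinal.mk ↥S = l)
    (hS : ∀ C : Set (ℕ → ℕ), IsCompact C → Cardinal.mk ↥(S ∩ C) < m)
    {A : Type} (U : Ultrafilter A)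
    (hU : ∃ f : ℕ → Set A, (∀ n, f n ∈ U) ∧ (⋂ n, f n) ∉ U) :
    UMeas.LMARegular U l m Ordinal.omega0 := by
  obtain ⟨g, hg⟩ := exists_tendsto_atTop_of_iInter_notMem hU
  obtain ⟨e⟩ := Cardinal.eq.mp ((Cardinal.mk_ord_toType l).trans hcard.symm)
  refine ⟨fun β => ClosedUBT.pi (boundSet g (e β)) (boundSet_mem hg _), ?_⟩
  rintro S' hS' ⟨s, hs⟩
  let t : ℕ → ℕ := fun n => g (s n (Ordinal.natCast_lt_omega0 n))
  have hbound : ∀ β ∈ S', (e β : ℕ → ℕ) ∈ Set.Icc 0 t := fun β hβ =>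
    ⟨fun _ => Nat.zero_le _, fun n => hs β hβ n (Ordinal.natCast_lt_omega0 n) n rfl⟩
  have hinj : Function.Injective
      fun β : S' => (⟨e β, (e β).2, hbound β β.2⟩ : ↥(S ∩ Set.Icc 0 t)) :=
    fun _ _ h => Subtype.ext <| e.injective <| Subtype.ext <|
      congrArg (fun x : ↥(S ∩ Set.Icc 0 t) => x.1) h
  exact (hS' ▸ Cardinal.mk_le_of_injective hinj).not_gt (hS _ isCompact_Icc)
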